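/- arXiv:1403.2085 — 2 statements merged into one kernel-verified Lean document; each statement's English description precedes it below -/
import Mathlib

section
/- For the random-coefficient AR(1) model $y_t = c\,y_{t-1} + u_t$ with conditional stationary distribution $y_t \mid c \sim N(0, 1/(1-c^2))$ and $\beta_0 = \mathbb{E}[c/(1-c^2)]/\mathbb{E}[1/(1-c^2)]$: defining $\epsilon_t = y_t - \beta_0 y_{t-1}$, one has $\mathbb{E}[y_{t-1}\epsilon_t \mid c] = (c - \beta_0)/(1-c^2)$ almost surely, which is nonzero almost surely whenever $c$ has a continuous (atomless) distribution. -/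
/-!
Write `Y = y_{t-1}`. By the model, `Y ε_t = (c - β₀) Y² + Y u_t`. Conditionally on `c`, `Y` is
`N(0, 1/(1-c²))`, so `E[(c - β₀) Y² ∣ c] = (c - β₀)/(1-c²)`; integrability of `Y²` comes from
`E[Y²] = E[1/(1-c²)] < ∞`. The noise `u_t` is centred and independent of `(c, Y)`, so
`E[Y u_t ∣ c, Y] = Y E[u_t] = 0`, and the tower property kills the second term.
Nonvanishing is immediate: `c ≠ β₀` a.s. once `c` has no atoms.
-/

open MeasureTheory ProbabilityTheory Filter
open scoped NNReal ENNReal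

lemma integrable_sq_gaussianReal (m : ℝ) (v : ℝ≥0) :
    Integrable (fun x : ℝ => x ^ 2) (gaussianReal m v) :=
  (memLp_id_gaussianReal 2).integrable_sq

lemma integral_sq_gaussianReal_zero (v : ℝ≥0) : ∫ x, x ^ 2 ∂gaussianReal 0 v = v := by
  rw [← variance_of_integral_eq_zero aemeasurable_id' integral_id_gaussianReal,
    variance_fun_id_gaussianReal]

lemma lintegral_ofReal_sq_gaussianReal_zero (v : ℝ≥0) :
    ∫⁻ x, ENNReal.ofReal (x ^ 2) ∂gaussianReal 0 v = v := by
  rw [← ofReal_integral_eq_lintegral_ofReal (integrable_sq_gaussianReal 0 v)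
    (ae_of_all _ fun x => sq_nonneg x), integral_sq_gaussianReal_zero, ENNReal.ofReal_coe_nnreal]

lemma condExp_mul_eq_zero_of_indepFun {Ω γ : Type*} {m mΩ : MeasurableSpace Ω}
    {mγ : MeasurableSpace γ} {μ : Measure Ω} [IsFiniteMeasure μ]
    {X : Ω → γ} {Y u : Ω → ℝ} (hX : Measurable X) (hm : m ≤ mγ.comap X)
    (hY : StronglyMeasurable[mγ.comap X] Y) (hu : Measurable u)
    (hindep : IndepFun u X μ) (hYu : Integrable (Y * u) μ) (huint : Integrable u μ)
    (hmean : μ[u] = 0) :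
    μ[Y * u | m] =ᵐ[μ] 0 := by
  have hu_cond : μ[u | mγ.comap X] =ᵐ[μ] fun _ => 0 := by
    simpa [hmean] using condExp_indep_eq hu.comap_le hX.comap_le
      (comap_measurable u).stronglyMeasurable hindep
  have hYu_cond : μ[Y * u | mγ.comap X] =ᵐ[μ] 0 := by
    refine (condExp_mul_of_stronglyMeasurable_left hY hYu huint).trans ?_
    filter_upwards [hu_cond] with ω hω
    simp [hω]
  calc μ[Y * u | m] =ᵐ[μ] μ[μ[Y * u | mγ.comap X] | m] :=
        (condExp_condExp_of_le hm hX.comap_le).symm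
    _ =ᵐ[μ] μ[0 | m] := condExp_congr_ae hYu_cond
    _ = 0 := condExp_zero

section CondGaussian

variable {Ω β : Type*} {mΩ : MeasurableSpace Ω} {mβ : MeasurableSpace β}
  {μ : Measure Ω} [IsFiniteMeasure μ] {c : Ω → β} {Y : Ω → ℝ} {V : β → ℝ≥0}

lemma lintegral_ofReal_sq_of_condDistrib_eq_gaussianReal (hc : Measurable c) (hY : Measurable Y)
    (hV : ∀ᵐ ω ∂μ, condDistrib Y c μ (c ω) = gaussianReal 0 (V (c ω))) :
    ∫⁻ ω, ENNReal.ofReal (Y ω ^ 2) ∂μ = ∫⁻ ω, V (c ω) ∂μ := by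
  have hsq : Measurable fun p : β × ℝ => ENNReal.ofReal (p.2 ^ 2) := by fun_prop
  calc ∫⁻ ω, ENNReal.ofReal (Y ω ^ 2) ∂μ
      = ∫⁻ p, ENNReal.ofReal (p.2 ^ 2) ∂(μ.map c ⊗ₘ condDistrib Y c μ) := by
        rw [compProd_map_condDistrib hY.aemeasurable, lintegral_map hsq (hc.prodMk hY)]
    _ = ∫⁻ ω, ∫⁻ y, ENNReal.ofReal (y ^ 2) ∂condDistrib Y c μ (c ω) ∂μ := by
        rw [Measure.lintegral_compProd hsq,
          lintegral_map (Measurable.lintegral_kernel_prod_right' hsq) hc]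
    _ = ∫⁻ ω, V (c ω) ∂μ := by
        refine lintegral_congr_ae ?_
        filter_upwards [hV] with ω hω
        rw [hω, lintegral_ofReal_sq_gaussianReal_zero]

lemma integrable_sq_of_condDistrib_eq_gaussianReal (hc : Measurable c) (hY : Measurable Y)
    (hV : ∀ᵐ ω ∂μ, condDistrib Y c μ (c ω) = gaussianReal 0 (V (c ω)))
    (hVint : Integrable (fun ω => (V (c ω) : ℝ)) μ) :
    Integrable (fun ω => Y ω ^ 2) μ := by
  refine ⟨by fun_prop, ?_⟩
  simp_rw [HasFiniteIntegral, Real.enorm_eq_ofReal (sq_nonneg _),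
    lintegral_ofReal_sq_of_condDistrib_eq_gaussianReal hc hY hV]
  simpa [HasFiniteIntegral] using hVint.2

lemma condExp_mul_sq_of_condDistrib_eq_gaussianReal (hc : Measurable c) (hY : Measurable Y)
    (hV : ∀ᵐ ω ∂μ, condDistrib Y c μ (c ω) = gaussianReal 0 (V (c ω)))
    {g : β → ℝ} (hg : Measurable g) (hint : Integrable (fun ω => g (c ω) * Y ω ^ 2) μ) :
    μ[fun ω => g (c ω) * Y ω ^ 2 | mβ.comap c] =ᵐ[μ] fun ω => g (c ω) * V (c ω) := by
  have hf : StronglyMeasurable fun p : β × ℝ => g p.1 * p.2 ^ 2 := by fun_prop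
  refine (condExp_prod_ae_eq_integral_condDistrib hc hY.aemeasurable hf hint).trans ?_
  filter_upwards [hV] with ω hω
  rw [hω, integral_const_mul, integral_sq_gaussianReal_zero]

end CondGaussian

lemma condExp_mul_residual_of_condDistrib_eq_gaussianReal {Ω : Type*} {mΩ : MeasurableSpace Ω}
    {μ : Measure Ω} [IsFiniteMeasure μ] {c Y u : Ω → ℝ} {V : ℝ → ℝ≥0} {K : ℝ} (β : ℝ)
    (hc : Measurable c) (hY : Measurable Y) (hu : Measurable u)
    (hV : ∀ᵐ ω ∂μ, condDistrib Y c μ (c ω) = gaussianReal 0 (V (c ω)))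
    (hVint : Integrable (fun ω => (V (c ω) : ℝ)) μ) (hcbd : ∀ᵐ ω ∂μ, |c ω| ≤ K)
    (hindep : IndepFun u (fun ω => (c ω, Y ω)) μ) (huint : Integrable u μ) (hmean : μ[u] = 0) :
    μ[fun ω => Y ω * (c ω * Y ω + u ω - β * Y ω) | MeasurableSpace.comap c inferInstance]
      =ᵐ[μ] fun ω => (c ω - β) * V (c ω) := by
  have hY2 := integrable_sq_of_condDistrib_eq_gaussianReal hc hY hV hVint
  have hYint : Integrable Y μ :=
    ((memLp_two_iff_integrable_sq hY.aestronglyMeasurable).mpr hY2).integrable one_le_two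
  have hYu : Integrable (Y * u) μ :=
    (hindep.comp measurable_id measurable_snd).symm.integrable_mul hYint huint
  have hsq_int : Integrable (fun ω => (c ω - β) * Y ω ^ 2) μ := by
    refine hY2.bdd_mul (c := K + |β|) (by fun_prop) ?_
    filter_upwards [hcbd] with ω hω
    exact (norm_sub_le _ _).trans (by simpa [Real.norm_eq_abs] using hω)
  have hsq := condExp_mul_sq_of_condDistrib_eq_gaussianReal hc hY hV
    (g := fun x => x - β) (by fun_prop) hsq_int
  have hcY : Measurable[MeasurableSpace.comap (fun ω => (c ω, Y ω)) inferInstance]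
      fun ω => (c ω, Y ω) := comap_measurable _
  have hnoise := condExp_mul_eq_zero_of_indepFun (hc.prodMk hY) hcY.fst.comap_le
    hcY.snd.stronglyMeasurable hu hindep hYu huint hmean
  have hdecomp : (fun ω => Y ω * (c ω * Y ω + u ω - β * Y ω))
      = (fun ω => (c ω - β) * Y ω ^ 2) + Y * u := by
    funext ω
    simp only [Pi.add_apply, Pi.mul_apply]
    ring
  rw [hdecomp]
  filter_upwards [condExp_add hsq_int hYu (MeasurableSpace.comap c inferInstance), hsq, hnoise]
    with ω h_add h_sq h_noise
  rw [h_add, Pi.add_apply, h_sq, h_noise, Pi.zero_apply, add_zero]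

theorem stmt8_general {Ω : Type*} [mΩ : MeasurableSpace Ω]
    (μ : Measure Ω) [IsProbabilityMeasure μ]
    (y u : ℤ → Ω → ℝ) (c : Ω → ℝ) (t : ℤ)
    (hc : Measurable c) (hyM : ∀ s, Measurable (y s)) (huM : ∀ s, Measurable (u s))
    (hcbd : ∀ᵐ ω ∂μ, |c ω| < 1)
    (hcint : Integrable (fun ω => 1 / (1 - (c ω) ^ 2)) μ)
    (hmodel : ∀ ω, y t ω = c ω * y (t - 1) ω + u t ω)
    (hu_gauss : Measure.map (u t) μ = gaussianReal 0 1)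
    (hu_indep : IndepFun (u t) (fun ω => (c ω, y (t - 1) ω)) μ)
    (hstat : ∀ᵐ ω ∂μ, condDistrib (y (t - 1)) c μ (c ω) =
      gaussianReal 0 (Real.toNNReal (1 / (1 - (c ω) ^ 2))))
    (mc : MeasurableSpace Ω) (hmc : mc = MeasurableSpace.comap c inferInstance)
    (β0 : ℝ)
    (ε : Ω → ℝ) (hε : ∀ ω, ε ω = y t ω - β0 * y (t - 1) ω) :
    (MeasureTheory.condExp (m₀ := mΩ) mc μ (fun ω => y (t - 1) ω * ε ω) =ᵐ[μ]
      fun ω => (c ω - β0) / (1 - (c ω) ^ 2)) ∧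
    ((∀ x : ℝ, μ {ω | c ω = x} = 0) →
      ∀ᵐ ω ∂μ, (c ω - β0) / (1 - (c ω) ^ 2) ≠ 0) := by
  subst hmc
  have hc_pos : ∀ᵐ ω ∂μ, 0 < 1 - c ω ^ 2 := by
    filter_upwards [hcbd] with ω hω
    nlinarith [abs_lt.mp hω]
  have hu_law : HasLaw (u t) (gaussianReal 0 1) μ := ⟨(huM t).aemeasurable, hu_gauss⟩
  have huint : Integrable (u t) μ :=
    (hu_law.map_eq ▸ (memLp_id_gaussianReal 1).integrable le_rfl).comp_measurable (huM t)
  have hresid : (fun ω => y (t - 1) ω * ε ω)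
      = fun ω => y (t - 1) ω * (c ω * y (t - 1) ω + u t ω - β0 * y (t - 1) ω) := by
    funext ω
    rw [hε, hmodel]
  refine ⟨?_, fun hatomless => ?_⟩
  · rw [hresid]
    filter_upwards [condExp_mul_residual_of_condDistrib_eq_gaussianReal β0 hc (hyM _) (huM t)
      (V := fun x => (1 / (1 - x ^ 2)).toNNReal) hstat hcint.real_toNNReal (hcbd.mono fun _ h => h.le) hu_indep huint
      (hu_law.integral_eq.trans integral_id_gaussianReal), hc_pos] with ω h hω
    rw [h, Real.coe_toNNReal _ (one_div_pos.mpr hω).le, mul_one_div]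
  · have hne : ∀ᵐ ω ∂μ, c ω ≠ β0 := measure_eq_zero_iff_ae_notMem.mp (hatomless β0)
    filter_upwards [hc_pos, hne] with ω hpos hω
    exact div_ne_zero (sub_ne_zero.mpr hω) hpos.ne'

/-- Random-coefficient AR(1): with `ε_t = y_t - β₀ y_{t-1}`,
`E[y_{t-1} ε_t ∣ c] = (c - β₀)/(1 - c²)` a.s., which is a.s. nonzero whenever the
distribution of `c` is atomless. -/
theorem stmt8 {Ω : Type*} [mΩ : MeasurableSpace Ω] [StandardBorelSpace Ω]
    (μ : Measure Ω) [IsProbabilityMeasure μ]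
    (y u : ℤ → Ω → ℝ) (c : Ω → ℝ) (t : ℤ)
    (hc : Measurable c) (hyM : ∀ s, Measurable (y s)) (huM : ∀ s, Measurable (u s))
    (hcbd : ∀ᵐ ω ∂μ, |c ω| < 1)
    (hcint : Integrable (fun ω => 1 / (1 - (c ω) ^ 2)) μ)
    (hmodel : ∀ ω, y t ω = c ω * y (t - 1) ω + u t ω)
    (hu_gauss : Measure.map (u t) μ = gaussianReal 0 1)
    (hu_indep : IndepFun (u t) (fun ω => (c ω, y (t - 1) ω)) μ)
    (hstat : ∀ᵐ ω ∂μ, condDistrib (y (t - 1)) c μ (c ω) =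
      gaussianReal 0 (Real.toNNReal (1 / (1 - (c ω) ^ 2))))
    (mc : MeasurableSpace Ω) (hmc : mc = MeasurableSpace.comap c inferInstance)
    (β0 : ℝ)
    (hβ0 : β0 = (∫ ω, c ω / (1 - (c ω) ^ 2) ∂μ) / ∫ ω, 1 / (1 - (c ω) ^ 2) ∂μ)
    (ε : Ω → ℝ) (hε : ∀ ω, ε ω = y t ω - β0 * y (t - 1) ω) :
    (MeasureTheory.condExp (m₀ := mΩ) mc μ (fun ω => y (t - 1) ω * ε ω) =ᵐ[μ]
      fun ω => (c ω - β0) / (1 - (c ω) ^ 2)) ∧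
    ((∀ x : ℝ, μ {ω | c ω = x} = 0) →
      ∀ᵐ ω ∂μ, (c ω - β0) / (1 - (c ω) ^ 2) ≠ 0) :=
  stmt8_general (mΩ := mΩ) μ y u c t hc hyM huM hcbd hcint hmodel hu_gauss hu_indep hstat mc hmc β0
    ε hε
end

section
/- (Stochastic order equivalence for bootstrap statistics) Let $\Delta_n$ be a statistic depending on data $Z_n$ and bootstrap weights $W_n$ (with $W_n$ independent of the data given the conditioning), and let $a_n > 0$ be deterministic. Then $\Delta_n = O_{P_W}(a_n)$ in probability (i.e., for every $\delta, \eta > 0$ there is $C$ with $\Pr(P_W(a_n^{-1}\|\Delta_n\| \ge C) > \delta) \le \eta$ for all $n$) if and only if $\Delta_n = O_P(a_n)$ unconditionally (i.e., $a_n^{-1}\|\Delta_n\|$ is tight). -/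
open MeasureTheory Filter


lemma aux_forward {Ω : Type*} {m : MeasurableSpace Ω} [mΩ : MeasurableSpace Ω]
    (μ : Measure Ω) [IsProbabilityMeasure μ] (hm : m ≤ mΩ)
    {A : Set Ω} (hA : MeasurableSet A) {δ : ℝ} (hδ : 0 ≤ δ) :
    (μ A).toReal ≤ δ + (μ {ω | δ < (μ[A.indicator (fun _ => (1:ℝ))|m]) ω}).toReal := by
  set g := μ[A.indicator (fun _ => (1:ℝ))|m] with hg
  have hSm : MeasurableSet {ω | δ < g ω} := by
    have : Measurable g := (stronglyMeasurable_condExp.mono hm).measurable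
    exact measurableSet_lt measurable_const this
  have hint : Integrable (A.indicator (fun _ => (1:ℝ))) μ := (integrable_const 1).indicator hA
  have h1 : g ≤ᵐ[μ] fun _ => (1:ℝ) := by
    have := condExp_mono (m := m) (μ := μ) hint (integrable_const (1:ℝ))
      (Filter.Eventually.of_forall (fun ω => Set.indicator_le_self' (fun _ _ => zero_le_one) ω))
    refine this.trans ?_
    rw [condExp_const hm]
  have key : g ≤ᵐ[μ] fun ω => δ + ({ω | δ < g ω}).indicator (fun _ => (1:ℝ)) ω := by
    filter_upwards [h1] with ω h1ω
    by_cases hω : δ < g ω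
    · simp only [Set.indicator_of_mem, Set.mem_setOf_eq, hω]
      linarith
    · simp only [Set.indicator_of_notMem, Set.mem_setOf_eq, hω, not_false_iff, add_zero]
      push_neg at hω; simpa using hω
  have hI : ∫ ω, g ω ∂μ = (μ A).toReal := by
    rw [hg, integral_condExp hm, integral_indicator_const (1:ℝ) hA]; simp [measureReal_def]
  have hRHS : Integrable (fun ω => δ + ({ω | δ < g ω}).indicator (fun _ => (1:ℝ)) ω) μ :=
    (integrable_const δ).add ((integrable_const 1).indicator hSm)
  calc (μ A).toReal = ∫ ω, g ω ∂μ := hI.symm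
    _ ≤ ∫ ω, (δ + ({ω | δ < g ω}).indicator (fun _ => (1:ℝ)) ω) ∂μ :=
        integral_mono_ae integrable_condExp hRHS key
    _ = δ + (μ {ω | δ < g ω}).toReal := by
        rw [integral_add (integrable_const δ) ((integrable_const 1).indicator hSm),
          integral_const, integral_indicator_const (1:ℝ) hSm]
        simp [measureReal_def]

lemma aux_backward {Ω : Type*} {m : MeasurableSpace Ω} [mΩ : MeasurableSpace Ω]
    (μ : Measure Ω) [IsProbabilityMeasure μ] (hm : m ≤ mΩ)
    {A : Set Ω} (hA : MeasurableSet A) {δ : ℝ} (hδ : 0 < δ) :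
    δ * (μ {ω | δ < (μ[A.indicator (fun _ => (1:ℝ))|m]) ω}).toReal ≤ (μ A).toReal := by
  set g := μ[A.indicator (fun _ => (1:ℝ))|m] with hg
  have hSm : MeasurableSet {ω | δ < g ω} := by
    have : Measurable g := (stronglyMeasurable_condExp.mono hm).measurable
    exact measurableSet_lt measurable_const this
  have hint : Integrable (A.indicator (fun _ => (1:ℝ))) μ := (integrable_const 1).indicator hA
  have h0 : 0 ≤ᵐ[μ] g := condExp_nonneg (Filter.Eventually.of_forall
    (fun ω => Set.indicator_nonneg (fun _ _ => zero_le_one) ω))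
  have hI : ∫ ω, g ω ∂μ = (μ A).toReal := by
    rw [hg, integral_condExp hm, integral_indicator_const (1:ℝ) hA]; simp [measureReal_def]
  calc δ * (μ {ω | δ < g ω}).toReal ≤ ∫ ω in {ω | δ < g ω}, g ω ∂μ :=
        setIntegral_ge_of_const_le_real hSm (measure_ne_top μ _) (fun x hx => le_of_lt hx)
          integrable_condExp.integrableOn
    _ ≤ ∫ ω, g ω ∂μ := setIntegral_le_integral integrable_condExp h0
    _ = (μ A).toReal := hI

/-- Stochastic order equivalence (Cheng–Huang, Lemma 3): `Δ_n = O_{P_W}(a_n)` in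
probability (conditionally on the data σ-algebra `m`) if and only if
`Δ_n = O_P(a_n)` unconditionally. -/
theorem stmt16 {Ω E : Type*} (m : MeasurableSpace Ω) [mΩ : MeasurableSpace Ω] [NormedAddCommGroup E]
    (μ : Measure Ω) [IsProbabilityMeasure μ]
    (hm : m ≤ mΩ)
    (Δ : ℕ → Ω → E) (hΔ : ∀ n, Measurable fun ω => ‖Δ n ω‖)
    (a : ℕ → ℝ) (ha : ∀ n, 0 < a n) :
    (∀ δ η : ℝ, 0 < δ → 0 < η → ∃ C : ℝ, ∀ n : ℕ,
        μ {ω | δ < (MeasureTheory.condExp (m₀ := mΩ) m μ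
            (Set.indicator {ω' | C ≤ (a n)⁻¹ * ‖Δ n ω'‖} fun _ => (1 : ℝ))) ω} ≤
          ENNReal.ofReal η) ↔
    (∀ η : ℝ, 0 < η → ∃ C : ℝ, ∀ n : ℕ,
        μ {ω | C ≤ (a n)⁻¹ * ‖Δ n ω‖} ≤ ENNReal.ofReal η) := by
  have hAm : ∀ (C : ℝ) (n : ℕ), MeasurableSet[mΩ] {ω' | C ≤ (a n)⁻¹ * ‖Δ n ω'‖} := by
    intro C n
    exact (measurableSet_le measurable_const (measurable_const_mul _ |>.comp (hΔ n)))
  constructor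
  · intro h η hη
    obtain ⟨C, hC⟩ := h (η/2) (η/2) (by linarith) (by linarith)
    refine ⟨C, fun n => ?_⟩
    have h1 := aux_forward (m := m) (mΩ := mΩ) μ hm (hAm C n) (δ := η/2) (by linarith)
    have h2 : (μ {ω | η/2 < (MeasureTheory.condExp (m₀ := mΩ) m μ
        (Set.indicator {ω' | C ≤ (a n)⁻¹ * ‖Δ n ω'‖} fun _ => (1 : ℝ))) ω}).toReal ≤ η/2 :=
      ENNReal.toReal_le_of_le_ofReal (by linarith) (hC n)
    refine (ENNReal.le_ofReal_iff_toReal_le (measure_ne_top μ _) (le_of_lt hη)).mpr ?_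
    linarith
  · intro h δ η hδ hη
    obtain ⟨C, hC⟩ := h (δ * η) (mul_pos hδ hη)
    refine ⟨C, fun n => ?_⟩
    have h1 := aux_backward (m := m) (mΩ := mΩ) μ hm (hAm C n) hδ
    have h2 : (μ {ω' | C ≤ (a n)⁻¹ * ‖Δ n ω'‖}).toReal ≤ δ * η :=
      ENNReal.toReal_le_of_le_ofReal (le_of_lt (mul_pos hδ hη)) (hC n)
    refine (ENNReal.le_ofReal_iff_toReal_le (measure_ne_top μ _) (le_of_lt hη)).mpr ?_
    nlinarith [ENNReal.toReal_nonneg (a := μ {ω | δ < (MeasureTheory.condExp (m₀ := mΩ) m μ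
        (Set.indicator {ω' | C ≤ (a n)⁻¹ * ‖Δ n ω'‖} fun _ => (1 : ℝ))) ω})]
end
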